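/- arXiv:2605.09464 — 4 statements merged into one kernel-verified Lean document; each statement's English description precedes it below -/
import Mathlib

section
/- Let N be a positive real, h_1 = 1, h_{i+1} = h_i + 2^{d_i} − 1 with d_i = 2^{A_s(h_i)} (s ≥ 1 fixed), and suppose a node v activated at the end of epoch i−1 receives at least N_u/(4·2^{d_{i-1}}) points where N_u ≥ N/h_j² for some j ≤ i−1. Then N_v ≥ N/h_i². -/
/-!
Write `m = h_{i-1}` and `d = 2^{Ack s m}`, so that `h_i = m + 2^d - 1 ≥ 2^d`. Since
`Ack s m ≥ m`, we have `2^d ≥ 2^{2^m} ≥ 4 m²`, hence `4 m² · 2^d ≤ (2^d)² ≤ h_i²`. As `(h_i)`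
is monotone, `h_j ≤ m`, and chaining the two lower bounds gives
`N_v ≥ N / (h_j² · 4 · 2^d) ≥ N / h_i²`.
-/

/-- The Ackermann-like hierarchy: `Ack 0 N = N`, `Ack 1 N = 2^N`,
and `Ack (i+1) N` is the `(N+1)`-fold iterate of `Ack i` applied to `N`. -/
def Ack : ℕ → ℕ → ℕ
  | 0, N => N
  | 1, N => 2 ^ N
  | (i+2), N => (Ack (i+1))^[N + 1] N

lemma self_le_Ack (s N : ℕ) : N ≤ Ack s N := by
  induction s generalizing N with
  | zero => simp [Ack]
  | succ s ih =>
    cases s with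
    | zero => exact (Nat.lt_two_pow_self (n := N)).le
    | succ t =>
      show N ≤ (Ack (t + 1))^[N + 1] N
      exact Function.id_le_iterate_of_id_le ih (N + 1) N

lemma four_mul_sq_le_two_pow_two_pow {m : ℕ} (hm : 1 ≤ m) : 4 * m ^ 2 ≤ 2 ^ 2 ^ m := by
  induction m, hm using Nat.le_induction with
  | base => norm_num
  | succ m hm ih =>
    calc 4 * (m + 1) ^ 2 ≤ 4 * m ^ 2 * (4 * m ^ 2) := by nlinarith [Nat.mul_le_mul hm hm]
      _ ≤ 2 ^ 2 ^ m * 2 ^ 2 ^ m := Nat.mul_le_mul ih ih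
      _ = 2 ^ 2 ^ (m + 1) := by rw [pow_succ 2 m, pow_mul, sq]

lemma four_mul_sq_mul_two_pow_le_sq {m d : ℕ} (hm : 1 ≤ m) (hd : 2 ^ m ≤ d) :
    4 * m ^ 2 * 2 ^ d ≤ (m + 2 ^ d - 1) ^ 2 := by
  have hsq : 4 * m ^ 2 ≤ 2 ^ d :=
    (four_mul_sq_le_two_pow_two_pow hm).trans (Nat.pow_le_pow_right two_pos hd)
  calc 4 * m ^ 2 * 2 ^ d ≤ 2 ^ d * 2 ^ d := Nat.mul_le_mul_right _ hsq
    _ ≤ (m + 2 ^ d - 1) ^ 2 := by rw [← sq]; exact Nat.pow_le_pow_left (by omega) 2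

section Recurrence

variable {h f : ℕ → ℕ} (hrec : ∀ i, 1 ≤ i → h (i + 1) = h i + 2 ^ f (h i) - 1)
include hrec

lemma monotoneOn_of_add_two_pow_sub_one : MonotoneOn h (Set.Ici 1) :=
  monotoneOn_nat_Ici_of_le_succ fun i hi => by
    rw [hrec i hi]
    have := Nat.one_le_two_pow (n := f (h i))
    omega

lemma one_le_of_add_two_pow_sub_one (h1 : h 1 = 1) {i : ℕ} (hi : 1 ≤ i) : 1 ≤ h i :=
  h1 ▸ monotoneOn_of_add_two_pow_sub_one hrec Set.self_mem_Ici hi hi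

end Recurrence

lemma div_le_of_div_le_of_div_le {N Nu Nv a b c : ℝ} (hN : 0 ≤ N) (ha : 0 < a) (hb : 0 < b)
    (habc : a * b ≤ c) (hNu : N / a ≤ Nu) (hNv : Nu / b ≤ Nv) : N / c ≤ Nv :=
  calc N / c ≤ N / (a * b) := div_le_div_of_nonneg_left hN (by positivity) habc
    _ = N / a / b := (div_div N a b).symm
    _ ≤ Nu / b := by gcongr
    _ ≤ Nv := hNv

theorem numpoints_general (s : ℕ) (h : ℕ → ℕ)
    (h1 : h 1 = 1)
    (hrec : ∀ i, 1 ≤ i → h (i + 1) = h i + 2 ^ (2 ^ Ack s (h i)) - 1)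
    (N Nu Nv : ℝ) (hN : 0 < N) (i j : ℕ) (hi : 2 ≤ i) (hj : 1 ≤ j)
    (hji : j ≤ i - 1)
    (hNu : N / (h j : ℝ) ^ 2 ≤ Nu)
    (hNv : Nu / (4 * (2 : ℝ) ^ (2 ^ Ack s (h (i - 1)))) ≤ Nv) :
    N / (h i : ℝ) ^ 2 ≤ Nv := by
  set m := h (i - 1)
  set d := 2 ^ Ack s m
  have hmono := monotoneOn_of_add_two_pow_sub_one (f := fun x => 2 ^ Ack s x) hrec
  have hpos : ∀ {k}, 1 ≤ k → 1 ≤ h k :=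
    one_le_of_add_two_pow_sub_one (f := fun x => 2 ^ Ack s x) hrec h1
  have hm : 1 ≤ m := hpos (by omega)
  have hjm : h j ≤ m := hmono hj (Set.mem_Ici.2 (by omega)) hji
  have hhi : h i = m + 2 ^ d - 1 := by
    obtain ⟨k, rfl⟩ : ∃ k, i = k + 1 := ⟨i - 1, by omega⟩
    exact hrec k (by omega)
  have hd : 2 ^ m ≤ d := Nat.pow_le_pow_right two_pos (self_le_Ack s m)
  have hden : h j ^ 2 * (4 * 2 ^ d) ≤ h i ^ 2 :=
    calc h j ^ 2 * (4 * 2 ^ d) ≤ 4 * m ^ 2 * 2 ^ d := by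
          rw [mul_left_comm, ← mul_assoc]; gcongr
      _ ≤ h i ^ 2 := hhi ▸ four_mul_sq_mul_two_pow_le_sq hm hd
  have hhj : 0 < h j := hpos hj
  exact div_le_of_div_le_of_div_le hN.le (by positivity) (by positivity) (by exact_mod_cast hden)
    hNu hNv

/-- Lemma `lem:numpoints`: if a node `v` activated at the end of epoch `i−1`
receives at least `N_u/(4·2^{d_{i-1}})` points, where `N_u ≥ N/h_j²` for some
`j ≤ i−1`, then `N_v ≥ N/h_i²`. -/
theorem numpoints (s : ℕ) (hs : 1 ≤ s) (h : ℕ → ℕ)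
    (h1 : h 1 = 1)
    (hrec : ∀ i, 1 ≤ i → h (i + 1) = h i + 2 ^ (2 ^ Ack s (h i)) - 1)
    (N Nu Nv : ℝ) (hN : 0 < N) (i j : ℕ) (hi : 2 ≤ i) (hj : 1 ≤ j)
    (hji : j ≤ i - 1)
    (hNu : N / (h j : ℝ) ^ 2 ≤ Nu)
    (hNv : Nu / (4 * (2 : ℝ) ^ (2 ^ Ack s (h (i - 1)))) ≤ Nv) :
    N / (h i : ℝ) ^ 2 ≤ Nv :=
  numpoints_general s h h1 hrec N Nu Nv hN i j hi hj hji hNu hNv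
end

section
/- With Φ defined as in the adversary potential recursion (Φ(h;())=h; Φ(h;(t,1)·S)=Φ(A(h);(t−1,1)·S); Φ(h;(t,κ)·S)=Φ(A(h);(A(h),κ−1)·(t−1,κ)·S) for κ>1; zero-count pairs may be dropped) and A = A_{s+1} from the Ackermann-like hierarchy, for every integer κ ≥ 1 and h ≥ 1: Φ(h; (1,κ)) ≤ A_{s+2κ−1}(h). -/
/-!
The recursion for `Φ` collapses to iterates: each unit of the count `t` of a head pair
`(t, κ + 1)` acts on the potential by one map `potentialStep A κ`. With `A = A_{s+1}` the map
at level `κ` is dominated by `A_m`, `m = s + 2κ + 1`, on positive arguments, because the next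
level runs it at most `A_m h` times from `A_m h`, and for `h ≥ 1`
`A_m^[A_m h] (A_m h) = A_m^[A_m h + 1] h ≤ A_{m+1} (A_{m+1} h) ≤ A_{m+2} h`.
So each level costs two steps of the hierarchy.
-/

open Function

theorem iterate_le_iterate {α : Type*} [Preorder α] {f : α → α} (hf : Monotone f)
    (hid : id ≤ f) {j k : ℕ} {a b : α} (hjk : j ≤ k) (hab : a ≤ b) : f^[j] a ≤ f^[k] b :=
  (hf.iterate j hab).trans (monotone_iterate_of_id_le hid hjk b)

theorem iterate_le_iterate_of_le_on {α : Type*} [Preorder α] {f g : α → α} {s : Set α}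
    (hf : Monotone f) (hg : Set.MapsTo g s s) (hgf : ∀ x ∈ s, g x ≤ f x) :
    ∀ n, ∀ x ∈ s, g^[n] x ≤ f^[n] x
  | 0, _, _ => le_rfl
  | n + 1, x, hx => calc
      g^[n] (g x) ≤ f^[n] (g x) := iterate_le_iterate_of_le_on hf hg hgf n _ (hg hx)
      _ ≤ f^[n] (f x) := hf.iterate n (hgf x hx)

theorem id_le_ack : ∀ i, id ≤ Ack i
  | 0 => le_rfl
  | 1 => fun _ => Nat.lt_two_pow_self.le
  | i + 2 => fun N => id_le_iterate_of_id_le (id_le_ack (i + 1)) (N + 1) N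

theorem ack_monotone : ∀ i, Monotone (Ack i)
  | 0 => monotone_id
  | 1 => fun _ _ hab => Nat.pow_le_pow_right two_pos hab
  | i + 2 => fun _ _ hab =>
      iterate_le_iterate (ack_monotone (i + 1)) (id_le_ack (i + 1)) (by omega) hab

theorem ack_le_ack_succ : ∀ i N, Ack i N ≤ Ack (i + 1) N
  | 0, N => id_le_ack 1 N
  | i + 1, N => monotone_iterate_of_id_le (id_le_ack (i + 1)) (by omega : 1 ≤ N + 1) N

theorem ack_left_monotone (N : ℕ) : Monotone (Ack · N) :=
  monotone_nat_of_le_succ (ack_le_ack_succ · N)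

theorem iterate_ack_le_ack_add_two {i n h : ℕ} (hn : n ≤ i + 1) (hh : 1 ≤ h) :
    (Ack (i + 1))^[Ack n h] (Ack n h) ≤ Ack (i + 3) h := by
  set f := Ack (i + 1)
  set g := Ack (i + 2)
  have hf := ack_monotone (i + 1)
  have hfid := id_le_ack (i + 1)
  have hfg : f h ≤ g h := ack_le_ack_succ _ _
  calc f^[Ack n h] (Ack n h)
      ≤ f^[f h] (f h) := by
        have := ack_left_monotone h hn
        exact iterate_le_iterate hf hfid this this
    _ = f^[f h + 1] h := (iterate_succ_apply f _ h).symm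
    _ ≤ f^[g h + 1] (g h) := iterate_le_iterate hf hfid (by omega) (id_le_ack _ h)
    _ = g^[2] h := rfl
    _ ≤ g^[h + 1] h := monotone_iterate_of_id_le (id_le_ack _) (by omega) h

/-- The map `h ↦ h'` with `Φ(h; (t + 1, κ + 1) · S) = Φ(h'; (t, κ + 1) · S)`. -/
def potentialStep (A : ℕ → ℕ) : ℕ → ℕ → ℕ
  | 0 => A
  | κ + 1 => fun h => (potentialStep A κ)^[A h] (A h)

theorem id_le_potentialStep {A : ℕ → ℕ} (hA : id ≤ A) : ∀ κ, id ≤ potentialStep A κ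
  | 0 => hA
  | κ + 1 => fun h => (hA h).trans (id_le_iterate_of_id_le (id_le_potentialStep hA κ) _ _)

theorem potentialStep_ack_le (s : ℕ) :
    ∀ κ h, 1 ≤ h → potentialStep (Ack (s + 1)) κ h ≤ Ack (s + 2 * κ + 1) h
  | 0, _, _ => le_rfl
  | κ + 1, h, hh => by
    have hAh : 1 ≤ Ack (s + 1) h := hh.trans (id_le_ack _ h)
    have hmaps : Set.MapsTo (potentialStep (Ack (s + 1)) κ) (Set.Ici 1) (Set.Ici 1) :=
      fun x hx => le_trans hx (id_le_potentialStep (id_le_ack _) κ x)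
    calc (potentialStep (Ack (s + 1)) κ)^[Ack (s + 1) h] (Ack (s + 1) h)
        ≤ (Ack (s + 2 * κ + 1))^[Ack (s + 1) h] (Ack (s + 1) h) :=
          iterate_le_iterate_of_le_on (ack_monotone _) hmaps
            (fun x hx => potentialStep_ack_le s κ x hx) _ _ hAh
      _ ≤ Ack (s + 2 * κ + 3) h := iterate_ack_le_ack_add_two (by omega) hh

theorem phi_cons_eq_iterate {α β γ : Type*} {Φ : α → List (ℕ × β) → γ} {g : α → α} {κ : β}
    (hzero : ∀ h S, Φ h ((0, κ) :: S) = Φ h S)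
    (hstep : ∀ h t S, Φ h ((t + 1, κ) :: S) = Φ (g h) ((t, κ) :: S)) :
    ∀ t h S, Φ h ((t, κ) :: S) = Φ (g^[t] h) S
  | 0, h, S => hzero h S
  | t + 1, h, S => by rw [hstep, phi_cons_eq_iterate hzero hstep t, iterate_succ_apply]

theorem phi_cons_eq_iterate_potentialStep {γ : Type*} {A : ℕ → ℕ} {Φ : ℕ → List (ℕ × ℕ) → γ}
    (hzero : ∀ h κ S, Φ h ((0, κ) :: S) = Φ h S)
    (hone : ∀ h t S, Φ h ((t + 1, 1) :: S) = Φ (A h) ((t, 1) :: S))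
    (hgen : ∀ h t κ S, 1 < κ →
      Φ h ((t + 1, κ) :: S) = Φ (A h) ((A h, κ - 1) :: (t, κ) :: S)) :
    ∀ κ t h S, Φ h ((t, κ + 1) :: S) = Φ ((potentialStep A κ)^[t] h) S
  | 0 => phi_cons_eq_iterate (hzero · 1) hone
  | κ + 1 => phi_cons_eq_iterate (hzero · (κ + 1 + 1)) fun h t S => by
      rw [hgen h t (κ + 1 + 1) S (by omega), Nat.add_sub_cancel,
        phi_cons_eq_iterate_potentialStep hzero hone hgen κ]
      rfl

theorem phi_le_ack_general (s : ℕ)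
    (Φ : ℕ → List (ℕ × ℕ) → ℕ)
    (hbase : ∀ h, Φ h [] = h)
    (hzero : ∀ h κ S, Φ h ((0, κ) :: S) = Φ h S)
    (hone : ∀ h t S, Φ h ((t + 1, 1) :: S) = Φ (Ack (s + 1) h) ((t, 1) :: S))
    (hgen : ∀ h t κ S, 1 < κ →
      Φ h ((t + 1, κ) :: S) =
        Φ (Ack (s + 1) h) ((Ack (s + 1) h, κ - 1) :: (t, κ) :: S)) :
    ∀ (κ h : ℕ), 1 ≤ κ → 1 ≤ h → Φ h [(1, κ)] ≤ Ack (s + 2 * κ - 1) h := by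
  intro κ h hκ hh
  obtain ⟨κ, rfl⟩ := Nat.exists_eq_add_of_le' hκ
  rw [phi_cons_eq_iterate_potentialStep hzero hone hgen κ 1 h [], hbase,
    show s + 2 * (κ + 1) - 1 = s + 2 * κ + 1 by omega]
  exact potentialStep_ack_le s κ h hh

/-- Lemma `lem:zeta`: with `A = A_{s+1}` from the Ackermann-like hierarchy and
`Φ` the adversary potential recursion, `Φ(h; (1,κ)) ≤ A_{s+2κ−1}(h)`. -/
theorem phi_le_ack (s : ℕ) (hs : 1 ≤ s)
    (Φ : ℕ → List (ℕ × ℕ) → ℕ)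
    (hbase : ∀ h, Φ h [] = h)
    (hzero : ∀ h κ S, Φ h ((0, κ) :: S) = Φ h S)
    (hone : ∀ h t S, Φ h ((t + 1, 1) :: S) = Φ (Ack (s + 1) h) ((t, 1) :: S))
    (hgen : ∀ h t κ S, 1 < κ →
      Φ h ((t + 1, κ) :: S) =
        Φ (Ack (s + 1) h) ((Ack (s + 1) h, κ - 1) :: (t, κ) :: S)) :
    ∀ (κ h : ℕ), 1 ≤ κ → 1 ≤ h → Φ h [(1, κ)] ≤ Ack (s + 2 * κ - 1) h :=
  phi_le_ack_general s Φ hbase hzero hone hgen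
end

section
/- If f : ℝ → ℝ is defined by f(N,k) = (N/B)·max{1, log_m k} (for fixed m > 1, B ≥ 1), and k = Σ_{i=1}^t k_i with each k_i > m and t ≥ m, then Σ_{i=1}^t f(N, k_i) ≤ f(tN, k/t) = f(tN, k) − f(tN, t). -/
/-- The distribution cost function `Distr(N,k) = (N/B)·max{1, log_m k}`. -/
noncomputable def Distr (m B N k : ℝ) : ℝ := N / B * max 1 (Real.logb m k)

/-- one_lt_logb helper -/
lemma one_lt_logb_aux {m x : ℝ} (hm : 1 < m) (hx : m < x) : 1 < Real.logb m x := by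
  have hx0 : 0 < x := lt_trans (lt_trans one_pos hm) hx
  rw [Real.lt_logb_iff_rpow_lt hm hx0, Real.rpow_one]
  exact hx

/-- Eq. (split): superadditivity of the distribution cost under splitting,
by concavity of the logarithm. -/
theorem distr_split (m B N : ℝ) (hm : 1 < m) (hB : 1 ≤ B) (hN : 0 < N)
    (t : ℕ) (ht : m ≤ (t : ℝ)) (ki : Fin t → ℝ) (hki : ∀ i, m < ki i)
    (k : ℝ) (hk : k = ∑ i, ki i) :
    (∑ i, Distr m B N (ki i)) ≤ Distr m B ((t : ℝ) * N) (k / t) ∧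
      Distr m B ((t : ℝ) * N) (k / t) =
        Distr m B ((t : ℝ) * N) k - Distr m B ((t : ℝ) * N) t := by
  have hm0 : (0:ℝ) < m := lt_trans one_pos hm
  have hlogm : 0 < Real.log m := Real.log_pos hm
  have ht1 : (1:ℝ) < (t : ℝ) := lt_of_lt_of_le hm ht
  have ht0 : (0:ℝ) < (t : ℝ) := lt_trans one_pos ht1
  have hB0 : (0:ℝ) < B := lt_of_lt_of_le one_pos hB
  have hkt : m < k / t := by
    rw [hk, lt_div_iff₀ ht0]
    calc m * (t:ℝ) = ∑ _i : Fin t, m := by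
          simp [Finset.sum_const, mul_comm]
        _ < ∑ i, ki i := by
          apply Finset.sum_lt_sum_of_nonempty
          · exact Finset.univ_nonempty_iff.2 ⟨⟨0, by exact_mod_cast ht0⟩⟩
          · intro i _; exact hki i
  have hkt1 : 1 < Real.logb m (k / t) := one_lt_logb_aux hm hkt
  have hmaxki : ∀ i, max 1 (Real.logb m (ki i)) = Real.logb m (ki i) := fun i =>
    max_eq_right (one_lt_logb_aux hm (hki i)).le
  have hmaxkt : max 1 (Real.logb m (k / t)) = Real.logb m (k / t) :=
    max_eq_right hkt1.le
  constructor
  · have jensen : (∑ i : Fin t, ((t:ℝ)⁻¹) • Real.log (ki i)) ≤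
        Real.log (∑ i : Fin t, ((t:ℝ)⁻¹) • ki i) := by
      apply (strictConcaveOn_log_Ioi.concaveOn).le_map_sum
      · intro i _; positivity
      · simp [Finset.sum_const, Finset.card_univ]
        field_simp
      · intro i _; exact Set.mem_Ioi.2 (lt_trans hm0 (hki i))
    have hsum : (∑ i : Fin t, ((t:ℝ)⁻¹) • ki i) = k / t := by
      rw [hk, ← Finset.smul_sum]; simp [smul_eq_mul, div_eq_inv_mul]
    rw [hsum] at jensen
    have jensen' : (t:ℝ)⁻¹ * ∑ i, Real.log (ki i) ≤ Real.log (k / t) := by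
      simpa [smul_eq_mul, Finset.mul_sum] using jensen
    have key : (∑ i, Real.log (ki i)) ≤ (t:ℝ) * Real.log (k / t) := by
      calc (∑ i, Real.log (ki i))
          = (t:ℝ) * ((t:ℝ)⁻¹ * ∑ i, Real.log (ki i)) := by
            field_simp
        _ ≤ (t:ℝ) * Real.log (k / t) :=
            mul_le_mul_of_nonneg_left jensen' ht0.le
    simp only [Distr, hmaxki, hmaxkt]
    have hNB : 0 < N / B := div_pos hN hB0
    calc (∑ i, N / B * Real.logb m (ki i))
        = N / B * ∑ i, Real.logb m (ki i) := by rw [Finset.mul_sum]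
      _ ≤ N / B * ((t:ℝ) * Real.logb m (k / t)) := by
          apply mul_le_mul_of_nonneg_left _ hNB.le
          simp only [Real.logb, ← Finset.sum_div, ← mul_div_assoc]
          exact div_le_div_of_nonneg_right key hlogm.le
      _ = (t:ℝ) * N / B * Real.logb m (k / t) := by ring
  · have hmt : m * (t:ℝ) < k := (lt_div_iff₀ ht0).1 hkt
    have hk1 : m < k := by nlinarith
    have hk1' : 1 < Real.logb m k := one_lt_logb_aux hm hk1
    have ht1' : 1 ≤ Real.logb m (t:ℝ) := by
      rw [Real.le_logb_iff_rpow_le hm ht0]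
      simpa using ht
    have hlogbdiv : Real.logb m (k / t) = Real.logb m k - Real.logb m t :=
      Real.logb_div (ne_of_gt (lt_trans hm0 hk1)) (ne_of_gt ht0)
    unfold Distr
    rw [hmaxkt, hlogbdiv, max_eq_right hk1'.le, max_eq_right ht1']
    ring
end

section
/- Let γ : ℕ × ℕ → ℕ be defined by γ(H,h) = 0 if H ≤ h and γ(H,h) = 2i where i is minimal with H ≤ β_i(h), for boundary functions β_0(x)=x, β_1(x)=2^x, β_{k+1}(x)=β_k^{(x+1)}(x). Suppose H₁,…,H_{2h} are nonnegative integers summing to at most H, with h < H, and let H⁺_i = Σ_{j<i} H_j. Then γ(H,h) ≥ 1 + (1/(2h)) Σ_{i=1}^{2h} γ(H_i, h + H⁺_i). -/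
/-- `γ(H,h) = 0` if `H ≤ h`, and otherwise `2i` where `i` is minimal with
`H ≤ β_i(h)`, the boundary functions `β_i` being the Ackermann-like hierarchy. -/
noncomputable def gam (H h : ℕ) : ℕ :=
  if H ≤ h then 0 else 2 * sInf {i : ℕ | H ≤ Ack i h}

/-! Write `γ(H, h) = 2(m + 1)`, so that `H ≤ β_{m+1}(h)`. Every term `γ(H_i, h + H⁺_i)` is at
most `2(m + 1)`, and at most `2m` unless `H_i > β_m(h + H⁺_i)`; call such an `i` a jump. At a jump
the partial sum `P = h + H⁺` grows at least to `f(P)` with `f(x) = x + β_m(x) + 1`, so after `h`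
jumps `P ≥ f^[h](h)`, and a further jump would push `P` beyond
`f^[h+1](h) > h + β_m(f^[h](h)) ≥ h + β_{m+1}(h) ≥ h + H`. Hence at most `h` of the `2h` terms are
jumps, which is exactly the slack the recurrence needs. -/

open Finset Function

theorem two_pow_mul_le_iterate {g : ℕ → ℕ} (hg : ∀ x, 2 * x ≤ g x) :
    ∀ k x, 2 ^ k * x ≤ g^[k] x
  | 0, _ => by simp
  | k + 1, x => by
    rw [iterate_succ_apply', pow_succ, mul_comm _ 2, mul_assoc]
    exact (Nat.mul_le_mul_left 2 (two_pow_mul_le_iterate hg k x)).trans (hg _)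

namespace Ack

theorem self_le : ∀ i x, x ≤ Ack i x
  | 0, _ => le_rfl
  | 1, _ => Nat.lt_two_pow_self.le
  | i + 2, x => id_le_iterate_of_id_le (self_le (i + 1)) (x + 1) x

theorem self_lt_succ : ∀ i x, x < Ack (i + 1) x
  | 0, _ => Nat.lt_two_pow_self
  | i + 1, x => by
    show x < (Ack (i + 1))^[x + 1] x
    rw [iterate_succ_apply']
    exact (id_le_iterate_of_id_le (self_le (i + 1)) x x).trans_lt (self_lt_succ i _)

theorem mono_right : ∀ i, Monotone (Ack i)
  | 0 => monotone_id
  | 1 => fun _ _ hab => Nat.pow_le_pow_right two_pos hab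
  | i + 2 => fun a b hab => by
    show (Ack (i + 1))^[a + 1] a ≤ (Ack (i + 1))^[b + 1] b
    exact ((mono_right (i + 1)).iterate _ hab).trans
      (monotone_iterate_of_id_le (self_le (i + 1)) (by omega) b)

theorem lt_succ_left {x : ℕ} (hx : 1 ≤ x) : ∀ i, Ack i x < Ack (i + 1) x
  | 0 => Nat.lt_two_pow_self
  | i + 1 => by
    show Ack (i + 1) x < (Ack (i + 1))^[x + 1] x
    rw [iterate_succ_apply']
    calc Ack (i + 1) x = (Ack (i + 1))^[1] x := rfl
      _ ≤ (Ack (i + 1))^[x] x := monotone_iterate_of_id_le (self_le (i + 1)) hx x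
      _ < _ := self_lt_succ i _

theorem strictMono_left {x : ℕ} (hx : 1 ≤ x) : StrictMono (Ack · x) :=
  strictMono_nat_of_lt_succ (lt_succ_left hx)

theorem succ_le_apply_iterate {m h : ℕ} {g : ℕ → ℕ}
    (h2 : ∀ x, 2 * x ≤ g x) (hAck : ∀ x, Ack m x ≤ g x) (hh : 1 ≤ h) :
    Ack (m + 1) h ≤ Ack m (g^[h] h) := by
  cases m with
  | zero =>
    calc Ack 1 h = 2 ^ h := rfl
      _ ≤ 2 ^ h * h := Nat.le_mul_of_pos_right _ hh
      _ ≤ g^[h] h := two_pow_mul_le_iterate h2 h h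
  | succ k =>
    show (Ack (k + 1))^[h + 1] h ≤ _
    rw [iterate_succ_apply']
    exact mono_right _ ((mono_right _).iterate_le_of_le hAck h h)

end Ack

theorem gam_le_of_le_ack {H h i : ℕ} (hi : H ≤ Ack i h) : gam H h ≤ 2 * i := by
  unfold gam
  split_ifs
  · exact Nat.zero_le _
  · exact Nat.mul_le_mul_left 2 (Nat.sInf_le hi)

theorem exists_gam_eq_two_mul_succ {H h : ℕ} (hh : 1 ≤ h) (hH : h < H) :
    ∃ m, gam H h = 2 * (m + 1) ∧ H ≤ Ack (m + 1) h := by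
  have hmem : H ≤ Ack (sInf {i | H ≤ Ack i h}) h :=
    Nat.sInf_mem (s := {i | H ≤ Ack i h}) ⟨H, (Ack.strictMono_left hh).id_le H⟩
  obtain ⟨m, hm⟩ : ∃ m, sInf {i | H ≤ Ack i h} = m + 1 :=
    Nat.exists_eq_add_one.mpr (Nat.pos_of_ne_zero fun h0 => by
      rw [h0] at hmem; exact hH.not_ge hmem)
  rw [hm] at hmem
  exact ⟨m, by rw [gam, if_neg hH.not_ge, hm], hmem⟩

theorem iterate_count_le {f P : ℕ → ℕ} (hf : Monotone f) (hP : Monotone P) {p : ℕ → Prop}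
    [DecidablePred p] (hp : ∀ n, p n → f (P n) ≤ P (n + 1)) :
    ∀ n, f^[Nat.count p n] (P 0) ≤ P n
  | 0 => le_rfl
  | n + 1 => by
    rw [Nat.count_succ]
    split_ifs with hn
    · rw [iterate_succ_apply']
      exact (hf (iterate_count_le hf hP hp n)).trans (hp n hn)
    · exact (iterate_count_le hf hP hp n).trans (hP n.le_succ)

theorem count_jumps_le {h H m n : ℕ} (hh : 1 ≤ h) (hH : H ≤ Ack (m + 1) h) {a : ℕ → ℕ}
    (ha : ∑ j ∈ range n, a j ≤ H) :
    Nat.count (fun j => Ack m (h + ∑ k ∈ range j, a k) < a j) n ≤ h := by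
  obtain ⟨P, hP⟩ : ∃ P : ℕ → ℕ, ∀ j, P j = h + ∑ k ∈ range j, a k := ⟨_, fun _ => rfl⟩
  obtain ⟨f, hf⟩ : ∃ f : ℕ → ℕ, ∀ x, f x = x + Ack m x + 1 := ⟨_, fun _ => rfl⟩
  have hf_mono : Monotone f := fun x y hxy => by
    have := Ack.mono_right m hxy
    rw [hf, hf]
    omega
  have hf_id : id ≤ f := fun x => by
    show x ≤ f x
    rw [hf]
    omega
  have hP_mono : Monotone P := monotone_nat_of_le_succ fun j => by simp [hP, sum_range_succ]
  have hjump : ∀ j, Ack m (h + ∑ k ∈ range j, a k) < a j → f (P j) ≤ P (j + 1) := fun j hj => by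
    rw [hf, hP, hP, sum_range_succ]
    omega
  by_contra! hcount
  have hAck : Ack (m + 1) h ≤ Ack m (f^[h] h) :=
    Ack.succ_le_apply_iterate (fun x => by have := Ack.self_le m x; rw [hf]; omega)
      (fun x => by rw [hf]; omega) hh
  have hh_le : h ≤ f^[h] h := id_le_iterate_of_id_le hf_id h h
  have := calc h + H < f (f^[h] h) := by rw [hf]; omega
    _ = f^[h + 1] h := (iterate_succ_apply' f h h).symm
    _ ≤ f^[Nat.count _ n] (P 0) := by
      rw [hP 0, sum_range_zero, add_zero]
      exact monotone_iterate_of_id_le hf_id hcount _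
    _ ≤ P n := iterate_count_le hf_mono hP_mono hjump n
  rw [hP] at this
  omega

theorem sum_gam_le {h H m n : ℕ} (hh : 1 ≤ h) (hH : H ≤ Ack (m + 1) h) {a : ℕ → ℕ}
    (ha : ∑ j ∈ range n, a j ≤ H) :
    ∑ j ∈ range n, gam (a j) (h + ∑ k ∈ range j, a k) ≤ n * (2 * m) + 2 * h := by
  classical
  calc ∑ j ∈ range n, gam (a j) (h + ∑ k ∈ range j, a k)
      ≤ ∑ j ∈ range n,
          (2 * m + 2 * if Ack m (h + ∑ k ∈ range j, a k) < a j then 1 else 0) :=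
        sum_le_sum fun j hj => by
          split_ifs with hjump
          · have : a j ≤ Ack (m + 1) (h + ∑ k ∈ range j, a k) :=
              ((single_le_sum (fun _ _ => Nat.zero_le _) hj).trans ha |>.trans hH).trans
                (Ack.mono_right _ (Nat.le_add_right _ _))
            exact (gam_le_of_le_ack this).trans_eq (by ring)
          · simpa using gam_le_of_le_ack (not_lt.mp hjump)
    _ = n * (2 * m) + 2 * Nat.count (fun j => Ack m (h + ∑ k ∈ range j, a k) < a j) n := by
        rw [sum_add_distrib, sum_const, card_range, smul_eq_mul, ← mul_sum, sum_boole,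
          Nat.count_eq_card_filter_range, Nat.cast_id]
    _ ≤ n * (2 * m) + 2 * h := by
        have := count_jumps_le hh hH ha
        omega

theorem Fin.sum_filter_lt_eq_sum_range {M : Type*} [AddCommMonoid M] {n : ℕ} (a : ℕ → M)
    (i : Fin n) : ∑ j ∈ univ.filter (fun j => j < i), a j = ∑ k ∈ range i, a k := by
  rw [filter_gt_eq_Iio, ← Nat.Iio_eq_range, ← Fin.map_valEmbedding_Iio, sum_map]
  rfl

/-- The recurrence Eq. (grec): `γ(H,h) ≥ 1 + (1/(2h)) Σ_i γ(H_i, h + H⁺_i)`. -/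
theorem gamma_recurrence (h H : ℕ) (hh : 1 ≤ h) (hH : h < H)
    (Hs : Fin (2 * h) → ℕ) (hsum : (∑ i, Hs i) ≤ H) :
    2 * h + ∑ i, gam (Hs i)
        (h + ∑ j ∈ Finset.univ.filter (fun j => j < i), Hs j) ≤
      2 * h * gam H h := by
  obtain ⟨m, hgam, hm⟩ := exists_gam_eq_two_mul_succ hh hH
  obtain ⟨a, ha⟩ : ∃ a : ℕ → ℕ, ∀ i, Hs i = a i :=
    ⟨fun k => if hk : k < 2 * h then Hs ⟨k, hk⟩ else 0, fun i => by simp⟩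
  simp only [ha, Fin.sum_filter_lt_eq_sum_range] at hsum ⊢
  rw [Fin.sum_univ_eq_sum_range a] at hsum
  rw [Fin.sum_univ_eq_sum_range (fun i => gam (a i) (h + ∑ k ∈ range i, a k)), hgam]
  have := sum_gam_le hh hm hsum
  linarith
end
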